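/- arXiv:0707.1365 — 3 statements merged into one kernel-verified Lean document; each statement's English description precedes it below -/
import Mathlib

section
/- Let J be a strongly stable Artinian monomial ideal in R = k[x_1,…,x_n], with f_1,…,f_n and J_1,…,J_{n−1} defined as in the context. Then the minimal system of monomial generators of J is exactly {x_1^{f_1}} ∪ {x_1^{α_1}⋯x_{i−1}^{α_{i−1}}·x_i^{f_i(α_1,…,α_{i−1})} : 2 ≤ i ≤ n and (α_1,…,α_{i−1}) ∈ J_{i−1}}. -/
/-
Combinatorial framework: a monomial ideal in `k[x_1,…,x_n]` is encoded by its set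
of monomials, viewed as exponent vectors in `Fin n → ℕ` (with `x_1,…,x_n`
corresponding to indices `0,…,n-1`).
-/

/-- A monomial ideal: a set of exponent vectors closed under multiplication by
arbitrary monomials. -/
def IsMonomialIdeal {n : ℕ} (S : Set (Fin n → ℕ)) : Prop :=
  ∀ m ∈ S, ∀ m' : Fin n → ℕ, m + m' ∈ S

/-- `R/J` is a finite-dimensional `k`-vector space iff the set of standard
monomials (the complement of the monomial set of `J`) is finite. -/
def IsArtinianMonomialSet {n : ℕ} (S : Set (Fin n → ℕ)) : Prop :=
  Sᶜ.Finite

/-- Strong stability: if `m ∈ J`, `x_j ∣ m` and `i < j`, then `x_i · m / x_j ∈ J`. -/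
def IsStronglyStable {n : ℕ} (S : Set (Fin n → ℕ)) : Prop :=
  ∀ m ∈ S, ∀ i j : Fin n, i < j → 0 < m j →
    (fun l => if l = i then m i + 1 else if l = j then m j - 1 else m l) ∈ S

/-- `x^a < x^b` in the reverse lexicographic order with `x_1 > ⋯ > x_n`
(used to compare monomials of the same degree): at the last index where the
exponents differ, `a` has the larger exponent. -/
def RevLexLT {n : ℕ} (a b : Fin n → ℕ) : Prop :=
  ∃ j : Fin n, b j < a j ∧ ∀ l : Fin n, j < l → a l = b l

/-- Total degree of a monomial. -/
def mdeg {n : ℕ} (m : Fin n → ℕ) : ℕ := ∑ l, m l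

/-- `m` is a minimal (monomial) generator of the monomial ideal `S`. -/
def IsMinGen {n : ℕ} (S : Set (Fin n → ℕ)) (m : Fin n → ℕ) : Prop :=
  m ∈ S ∧ ∀ m' ∈ S, (∀ l, m' l ≤ m l) → m' = m

/-- Almost reverse lexicographic: `S` contains every monomial that is greater in
reverse lexicographic order than some minimal generator of `S` of the same degree. -/
def AlmostRevLex {n : ℕ} (S : Set (Fin n → ℕ)) : Prop :=
  ∀ M N : Fin n → ℕ, IsMinGen S N → mdeg M = mdeg N → RevLexLT N M → M ∈ S

/-- The exponent vector of `x_1^{α 0} ⋯ x_i^{α (i-1)} · x_{i+1}^t`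
(0-based: positions `0,…,i-1` carry `α`, position `i` carries `t`). -/
def monVec (n i : ℕ) (α : ℕ → ℕ) (t : ℕ) : Fin n → ℕ :=
  fun l => if (l : ℕ) < i then α l else if (l : ℕ) = i then t else 0

/-- `fF S i α = min {t : x_1^{α 0}⋯x_i^{α (i-1)} · x_{i+1}^t ∈ S}`; this is the
paper's `f_{i+1}(α_1,…,α_i)` (0-based `i`, so `fF S 0 _` is the paper's `f_1`). -/
noncomputable def fF {n : ℕ} (S : Set (Fin n → ℕ)) (i : ℕ) (α : ℕ → ℕ) : ℕ :=
  sInf {t | monVec n i α t ∈ S}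

/-- The paper's set `J_i`: tuples `(α_1,…,α_i)` (recorded in positions
`0,…,i-1` and padded by zeros) with `α_1 < f_1` and
`α_j < f_j(α_1,…,α_{j-1})` for `2 ≤ j ≤ i`. -/
def JSet {n : ℕ} (S : Set (Fin n → ℕ)) (i : ℕ) : Set (ℕ → ℕ) :=
  {α | (∀ l, i ≤ l → α l = 0) ∧ ∀ j, j < i → α j < fF S j α}

/-- `|α| = α_1 + ⋯ + α_i`. -/
def asum (i : ℕ) (α : ℕ → ℕ) : ℕ := ∑ j ∈ Finset.range i, α j

/-- The tuple `(0,…,0,s)` of length `i`. -/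
def lastVec (i s : ℕ) : ℕ → ℕ := fun l => if l = i - 1 then s else 0

/-- Reverse lexicographic comparison of `i`-tuples: `x^a < x^b`. -/
def RevLexLT' (a b : ℕ → ℕ) : Prop :=
  ∃ j : ℕ, b j < a j ∧ ∀ l, j < l → a l = b l

/-!
A monomial `m` of a monomial ideal `J` is a minimal generator iff `m / x_j ∉ J` for every
variable `x_j` dividing `m`. If `J` is strongly stable and `x_i` is the last variable of `m`,
only `j = i` has to be tested, since `m / x_j ∈ J` with `j < i` gives `m / x_i ∈ J` by one Borel
move. Writing `m = x^α x_i^t`, the condition `m / x_i ∉ J` says `t = f_i(α)`, and for a minimal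
generator `α ∈ J_{i-1}` because the shorter monomials `x_1^{α_1} ⋯ x_k^{α_k}` must lie outside `J`.
-/

open Function

section MonomialSets

variable {n : ℕ} {S : Set (Fin n → ℕ)}

theorem IsMonomialIdeal.isUpperSet (hS : IsMonomialIdeal S) : IsUpperSet S := by
  intro a b hab ha
  simpa only [add_tsub_cancel_of_le hab] using hS a ha (b - a)

theorem IsUpperSet.isMinGen_iff (hS : IsUpperSet S) {m : Fin n → ℕ} :
    IsMinGen S m ↔ m ∈ S ∧ ∀ j, 0 < m j → update m j (m j - 1) ∉ S := by
  refine ⟨fun h => ⟨h.1, fun j hj hmem => ?_⟩, fun ⟨hm, h⟩ => ⟨hm, fun w hw hle => ?_⟩⟩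
  · have hle : update m j (m j - 1) ≤ m := update_le_iff.2 ⟨tsub_le_self, fun _ _ => le_rfl⟩
    have := congrFun (h.2 _ hmem hle) j
    simp only [update_self] at this
    omega
  · by_contra hne
    obtain ⟨j, hj⟩ := (Pi.lt_def.1 (lt_of_le_of_ne (show w ≤ m from hle) hne)).2
    refine h j (by omega) (hS ?_ hw)
    exact le_update_iff.2 ⟨by omega, fun k _ => hle k⟩

theorem IsStronglyStable.update_pred_mem (hSS : IsStronglyStable S) {m : Fin n → ℕ}
    {i j : Fin n} (hij : i < j) (hi : 0 < m i) (hj : 0 < m j)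
    (h : update m i (m i - 1) ∈ S) : update m j (m j - 1) ∈ S := by
  convert hSS _ h i j hij (by rwa [update_of_ne hij.ne']) using 1
  funext l
  simp only [update_apply]
  split_ifs <;> subst_vars <;> omega

end MonomialSets

section MonVec

variable {n i : ℕ} {α : ℕ → ℕ} {s t : ℕ} {l : Fin n}

theorem monVec_of_lt (h : (l : ℕ) < i) : monVec n i α t l = α l := if_pos h

theorem monVec_of_eq (h : (l : ℕ) = i) : monVec n i α t l = t := by
  simp [monVec, h]

theorem monVec_of_gt (h : i < l) : monVec n i α t l = 0 := by
  simp [monVec, h.ne', h.not_gt]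

theorem monVec_self (hi : i < n) : monVec n i α t ⟨i, hi⟩ = t := monVec_of_eq rfl

theorem monVec_mono : Monotone (monVec n i α) := by
  intro s t hst l
  rcases lt_trichotomy (l : ℕ) i with h | h | h
  · simp only [monVec_of_lt h, le_rfl]
  · simpa only [monVec_of_eq h] using hst
  · simp only [monVec_of_gt h, le_rfl]

theorem monVec_le_of_lt {k : ℕ} (hk : k < i) (hs : s ≤ α k) :
    monVec n k α s ≤ monVec n i α t := by
  intro l
  rcases lt_trichotomy (l : ℕ) k with h | h | h
  · rw [monVec_of_lt h, monVec_of_lt (h.trans hk)]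
  · rw [monVec_of_eq h, monVec_of_lt (h ▸ hk), h]
    exact hs
  · rw [monVec_of_gt h]
    exact Nat.zero_le _

theorem monVec_succ_zero : monVec n (i + 1) α 0 = monVec n i α (α i) := by
  funext l
  rcases lt_trichotomy (l : ℕ) i with h | h | h
  · rw [monVec_of_lt (by omega), monVec_of_lt h]
  · rw [monVec_of_lt (by omega), monVec_of_eq h, h]
  · rw [monVec_of_gt h]
    rcases (Nat.succ_le_of_lt h).eq_or_lt with h' | h'
    · rw [monVec_of_eq h'.symm]
    · rw [monVec_of_gt h']

theorem update_monVec (hi : i < n) :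
    update (monVec n i α t) ⟨i, hi⟩ s = monVec n i α s := by
  funext l
  by_cases h : (l : ℕ) = i
  · rw [show l = ⟨i, hi⟩ from Fin.ext h, update_self, monVec_self]
  · rw [update_of_ne (fun e => h (congrArg Fin.val e))]
    simp [monVec, h]

/-- The exponents of `x_1, …, x_i` in `m`, encoded as in `JSet`. -/
def initExps (m : Fin n → ℕ) (i : Fin n) : ℕ → ℕ :=
  fun l => if h : l < i then m ⟨l, h.trans i.isLt⟩ else 0

theorem initExps_eq_zero {m : Fin n → ℕ} {i : Fin n} (hi : (i : ℕ) = 0) : initExps m i = 0 := by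
  funext l
  simp [initExps, hi]

theorem monVec_initExps {m : Fin n → ℕ} {i : Fin n} (hlast : ∀ l, i < l → m l = 0) :
    monVec n i (initExps m i) (m i) = m := by
  funext l
  rcases lt_trichotomy (l : ℕ) i with h | h | h
  · simp [monVec_of_lt h, initExps, h]
  · rw [monVec_of_eq h, Fin.ext h]
  · rw [monVec_of_gt h, hlast l h]

end MonVec

section Staircase

variable {n i : ℕ} {S : Set (Fin n → ℕ)} {α : ℕ → ℕ} {t : ℕ}

theorem fF_mem (hArt : IsArtinianMonomialSet S) (hi : i < n) (α : ℕ → ℕ) :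
    monVec n i α (fF S i α) ∈ S := by
  refine Nat.sInf_mem (s := {t | monVec n i α t ∈ S}) (Set.nonempty_iff_ne_empty.2 fun h => ?_)
  have hinj : Injective (monVec n i α) := fun a b hab => by
    simpa only [monVec_self] using congrFun hab ⟨i, hi⟩
  exact Set.infinite_of_injective_forall_mem hinj (Set.eq_empty_iff_forall_notMem.1 h) hArt

theorem monVec_mem_iff_fF_le (hS : IsUpperSet S) (hArt : IsArtinianMonomialSet S) (hi : i < n) :
    monVec n i α t ∈ S ↔ fF S i α ≤ t :=
  ⟨fun h => Nat.sInf_le h, fun h => hS (monVec_mono h) (fF_mem hArt hi α)⟩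

theorem fF_pos_of_mem_JSet (hS : IsUpperSet S) (hArt : IsArtinianMonomialSet S) (hin : i < n)
    (hi : 0 < i) (hα : α ∈ JSet S i) : 0 < fF S i α := by
  obtain ⟨k, rfl⟩ : ∃ k, i = k + 1 := ⟨i - 1, by omega⟩
  have hprev : monVec n k α (α k) ∉ S := by
    rw [monVec_mem_iff_fF_le hS hArt (by omega), not_le]
    exact hα.2 k (by omega)
  rw [← monVec_succ_zero, monVec_mem_iff_fF_le hS hArt hin, Nat.le_zero] at hprev
  exact Nat.pos_of_ne_zero hprev

theorem isMinGen_monVec_fF (hS : IsUpperSet S) (hArt : IsArtinianMonomialSet S)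
    (hSS : IsStronglyStable S) (hi : i < n) (hpos : i = 0 ∨ 0 < fF S i α) :
    IsMinGen S (monVec n i α (fF S i α)) := by
  set F := fF S i α
  set p : Fin n := ⟨i, hi⟩
  have hdrop : 0 < F → update (monVec n i α F) p (F - 1) ∉ S := fun hF => by
    rw [update_monVec, monVec_mem_iff_fF_le hS hArt hi]
    omega
  have hmp : monVec n i α F p = F := monVec_self hi
  refine hS.isMinGen_iff.2 ⟨fF_mem hArt hi α, fun j hj hmem => ?_⟩
  rcases lt_trichotomy j p with hjp | rfl | hpj
  · have hF : 0 < F := hpos.resolve_left (by have : (j : ℕ) < i := hjp; omega)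
    have hmem' := hSS.update_pred_mem hjp hj (by rwa [hmp]) hmem
    rw [hmp] at hmem'
    exact hdrop hF hmem'
  · rw [hmp] at hj hmem
    exact hdrop hj hmem
  · rw [monVec_of_gt (show i < (j : ℕ) from hpj)] at hj
    exact hj.false

theorem IsMinGen.eq_monVec_fF (hS : IsUpperSet S) (hArt : IsArtinianMonomialSet S)
    {m : Fin n → ℕ} (h : IsMinGen S m) {i : Fin n} (hpos : (i : ℕ) = 0 ∨ 0 < m i)
    (hlast : ∀ l, i < l → m l = 0) :
    initExps m i ∈ JSet S i ∧ m = monVec n i (initExps m i) (fF S i (initExps m i)) := by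
  set α := initExps m i
  have hm : monVec n i α (m i) = m := monVec_initExps hlast
  refine ⟨⟨fun l hl => by simp [α, initExps, hl.not_gt], fun k hk => ?_⟩, ?_⟩
  · by_contra hge
    have hmem : monVec n k α (α k) ∈ S :=
      (monVec_mem_iff_fF_le hS hArt (hk.trans i.isLt)).2 (not_lt.1 hge)
    have heq := congrFun (h.2 _ hmem ((monVec_le_of_lt hk le_rfl).trans hm.le)) i
    rw [monVec_of_gt hk] at heq
    omega
  · have hF : fF S i α ≤ m i := (monVec_mem_iff_fF_le hS hArt i.isLt).1 (by rw [hm]; exact h.1)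
    exact (h.2 _ (fF_mem hArt i.isLt α) ((monVec_mono hF).trans hm.le)).symm

theorem exists_last_support (hn : 0 < n) (m : Fin n → ℕ) :
    ∃ i : Fin n, ((i : ℕ) = 0 ∨ 0 < m i) ∧ ∀ l, i < l → m l = 0 := by
  obtain ⟨i, hi, hmax⟩ := (Finset.univ.filter fun l : Fin n => (l : ℕ) = 0 ∨ 0 < m l).exists_max_image
    id ⟨⟨0, hn⟩, by simp⟩
  refine ⟨i, (Finset.mem_filter.1 hi).2, fun l hl => Nat.eq_zero_of_not_pos fun hpos => ?_⟩
  exact (hmax l (by simp [hpos])).not_gt hl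

end Staircase

/-- Proposition on minimal generators.  Let `J` be a strongly
stable Artinian monomial ideal in `k[x_1,…,x_n]`.  Then the minimal system of
monomial generators of `J` is exactly
`{x_1^{f_1}} ∪ {x_1^{α_1}⋯x_{i-1}^{α_{i-1}} x_i^{f_i(α)} : 2 ≤ i ≤ n, α ∈ J_{i-1}}`
(here, in 0-based indexing, `i - 1` in the paper corresponds to `i` below). -/
theorem minimal_generators_of_strongly_stable
    {n : ℕ} (hn : 0 < n) (S : Set (Fin n → ℕ))
    (hIdeal : IsMonomialIdeal S) (hArt : IsArtinianMonomialSet S)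
    (hSS : IsStronglyStable S) (m : Fin n → ℕ) :
    IsMinGen S m ↔
      m = monVec n 0 0 (fF S 0 0) ∨
      ∃ i, 1 ≤ i ∧ i ≤ n - 1 ∧ ∃ α ∈ JSet S i, m = monVec n i α (fF S i α) := by
  have hS := hIdeal.isUpperSet
  constructor
  · intro h
    obtain ⟨i, hpos, hlast⟩ := exists_last_support hn m
    obtain ⟨hα, hm⟩ := h.eq_monVec_fF hS hArt hpos hlast
    rcases Nat.eq_zero_or_pos i with hi | hi
    · rw [initExps_eq_zero hi, hi] at hm
      exact Or.inl hm
    · exact Or.inr ⟨i, hi, by omega, _, hα, hm⟩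
  · rintro (rfl | ⟨i, hi, hle, α, hα, rfl⟩)
    · exact isMinGen_monVec_fF hS hArt hSS hn (Or.inl rfl)
    · have hin : i < n := by omega
      exact isMinGen_monVec_fF hS hArt hSS hin (Or.inr (fF_pos_of_mem_JSet hS hArt hin hi hα))
end

section
/- Let J be a strongly stable Artinian monomial ideal in R = k[x_1,…,x_n] and 1 ≤ i ≤ n−1. If (0,…,0,a) and (0,…,0,b) are elements of J_i with a ≤ b, then a + f_{i+1}(0,…,0,a) ≥ b + f_{i+1}(0,…,0,b). -/
/-
Moving one factor `x_{i+1}` of the generator `x_i^c x_{i+1}^{f_{i+1}(0,…,0,c)}` to `x_i` keeps it in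
`J` by strong stability, so `f_{i+1}(0,…,0,c+1) ≤ f_{i+1}(0,…,0,c) - 1` as long as that exponent
is positive. It is positive for `c ≤ b`, because `(0,…,0,b) ∈ J_i` gives `c ≤ b < f_i(0,…,0)`,
that is, `x_i^c ∉ J`. Hence `c + f_{i+1}(0,…,0,c)` is antitone on `c ≤ b`.
-/

variable {n : ℕ} {S : Set (Fin n → ℕ)} {i : ℕ}

theorem IsArtinianMonomialSet.exists_monVec_mem (hArt : IsArtinianMonomialSet S) (hin : i < n)
    (α : ℕ → ℕ) : ∃ t, monVec n i α t ∈ S := by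
  by_contra! hout
  have hinj : Function.Injective (monVec n i α) := fun s t hst => by
    simpa [monVec] using congrFun hst ⟨i, hin⟩
  exact Set.infinite_of_injective_forall_mem hinj hout hArt

theorem IsArtinianMonomialSet.monVec_fF_mem (hArt : IsArtinianMonomialSet S) (hin : i < n)
    (α : ℕ → ℕ) : monVec n i α (fF S i α) ∈ S :=
  Nat.sInf_mem (hArt.exists_monVec_mem hin α)

theorem IsStronglyStable.monVec_update_mem (hSS : IsStronglyStable S) (hi1 : 1 ≤ i) (hin : i < n)
    {α : ℕ → ℕ} {t : ℕ} (hmem : monVec n i α (t + 1) ∈ S) :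
    monVec n i (Function.update α (i - 1) (α (i - 1) + 1)) t ∈ S := by
  have hlt : (⟨i - 1, by omega⟩ : Fin n) < ⟨i, hin⟩ := Fin.mk_lt_mk.2 (by omega)
  convert hSS _ hmem _ _ hlt (by simp [monVec]) using 1
  funext ⟨l, hl⟩
  simp only [monVec, Function.update_apply, Fin.mk.injEq]
  split_ifs <;> first | rfl | omega

theorem fF_update_add_one_le (hArt : IsArtinianMonomialSet S) (hSS : IsStronglyStable S)
    (hi1 : 1 ≤ i) (hin : i < n) {α : ℕ → ℕ} (hpos : 0 < fF S i α) :
    fF S i (Function.update α (i - 1) (α (i - 1) + 1)) + 1 ≤ fF S i α := by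
  have hmem := hArt.monVec_fF_mem hin α
  rw [← Nat.sub_add_cancel hpos] at hmem
  have : fF S i _ ≤ fF S i α - 1 := Nat.sInf_le (hSS.monVec_update_mem hi1 hin hmem)
  omega

theorem lastVec_add_one (c : ℕ) :
    lastVec i (c + 1) = Function.update (lastVec i c) (i - 1) (lastVec i c (i - 1) + 1) := by
  funext l
  by_cases hl : l = i - 1 <;> simp [lastVec, hl]

theorem monVec_lastVec_zero (hi1 : 1 ≤ i) (b c : ℕ) :
    monVec n i (lastVec i c) 0 = monVec n (i - 1) (lastVec i b) c := by
  funext ⟨l, hl⟩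
  simp only [monVec, lastVec]
  split_ifs <;> omega

theorem fF_lastVec_pos (hArt : IsArtinianMonomialSet S) (hi1 : 1 ≤ i) (hin : i < n)
    {b c : ℕ} (hb : lastVec i b ∈ JSet S i) (hcb : c ≤ b) : 0 < fF S i (lastVec i c) := by
  have hc_lt : c < fF S (i - 1) (lastVec i b) :=
    hcb.trans_lt (by simpa [lastVec] using hb.2 (i - 1) (by omega))
  refine Nat.pos_of_ne_zero fun h0 => Nat.notMem_of_lt_sInf hc_lt ?_
  simpa [h0, monVec_lastVec_zero hi1 b c] using hArt.monVec_fF_mem hin (lastVec i c)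

theorem fF_lastVec_sum_antitone_general
    {n : ℕ} (S : Set (Fin n → ℕ))
    (hArt : IsArtinianMonomialSet S)
    (hSS : IsStronglyStable S)
    (i : ℕ) (hi1 : 1 ≤ i) (hin : i ≤ n - 1)
    (a b : ℕ) (hb : lastVec i b ∈ JSet S i)
    (hab : a ≤ b) :
    b + fF S i (lastVec i b) ≤ a + fF S i (lastVec i a) := by
  have hin' : i < n := by omega
  have hstep : ∀ c < b, c + 1 + fF S i (lastVec i (c + 1)) ≤ c + fF S i (lastVec i c) := by
    intro c hcb
    have := fF_update_add_one_le hArt hSS hi1 hin' (fF_lastVec_pos hArt hi1 hin' hb hcb.le)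
    rw [← lastVec_add_one] at this
    omega
  have hanti : AntitoneOn (fun c => c + fF S i (lastVec i c)) (Set.Iic b) :=
    antitoneOn_of_succ_le Set.ordConnected_Iic fun c _ _ hc => by
      rw [Set.mem_Iic, Order.succ_eq_add_one] at hc
      simpa only [Order.succ_eq_add_one] using hstep c hc
  exact hanti (Set.mem_Iic.2 hab) (Set.mem_Iic.2 le_rfl) hab

/-- Lemma, part (3).  Let `J` be a strongly stable Artinian
monomial ideal in `k[x_1,…,x_n]` and `1 ≤ i ≤ n-1`.  If `(0,…,0,a)` and
`(0,…,0,b)` are elements of `J_i` with `a ≤ b`, then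
`a + f_{i+1}(0,…,0,a) ≥ b + f_{i+1}(0,…,0,b)`. -/
theorem fF_lastVec_sum_antitone
    {n : ℕ} (S : Set (Fin n → ℕ))
    (hIdeal : IsMonomialIdeal S) (hArt : IsArtinianMonomialSet S)
    (hSS : IsStronglyStable S)
    (i : ℕ) (hi1 : 1 ≤ i) (hin : i ≤ n - 1)
    (a b : ℕ) (ha : lastVec i a ∈ JSet S i) (hb : lastVec i b ∈ JSet S i)
    (hab : a ≤ b) :
    b + fF S i (lastVec i b) ≤ a + fF S i (lastVec i a) :=
  fF_lastVec_sum_antitone_general S hArt hSS i hi1 hin a b hb hab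
end

section
/- Let J be a strongly stable Artinian monomial ideal in R = k[x_1,…,x_n]. Then J is almost reverse lexicographic if and only if for every 1 ≤ i ≤ n−1 the following two conditions hold: (1) f_{i+1}(0,…,0,|α|+1) + 1 ≤ f_{i+1}(α) for every α = (α_1,…,α_i) ∈ J_i; and (2) f_{i+1}(β) ≤ f_{i+1}(α) for all α, β ∈ J_i with |α| = |β| and α < β in the reverse lexicographic order. -/
/-
Strong stability makes `J` closed under the Borel order: it contains every monomial whose
partial degrees `m_1 + ⋯ + m_k` all dominate those of a member of `J`. A minimal generator
whose last variable is `x_{i+1}` has the form `x^α x_{i+1}^{f_{i+1}(α)}` with `α ∈ J_i`, and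
a monomial of the same degree above it in revlex order either has a smaller power of `x_{i+1}`
or the same power and a revlex-larger `β` in front. All monomials of the first kind are
Borel-above `x_i^{|α|+1} x_{i+1}^{f_{i+1}(α)-1}`, whose membership is condition (1); those of
the second kind lie in `J` exactly by condition (2). Conversely, for an arbitrary `α ∈ J_i`
the minimal generator dividing `x^α x_{i+1}^{f_{i+1}(α)}` still ends in `x_{i+1}^{f_{i+1}(α)}`,
which transfers both conditions from generators to all of `J_i`.
-/

open Finset

section

variable {n : ℕ} {S : Set (Fin n → ℕ)}

theorem IsMonomialIdeal.mem_of_le (hI : IsMonomialIdeal S) {a b : Fin n → ℕ}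
    (ha : a ∈ S) (hab : a ≤ b) : b ∈ S := by
  simpa [add_tsub_cancel_of_le hab] using hI a ha (b - a)

theorem exists_isMinGen_le {m : Fin n → ℕ} (hm : m ∈ S) : ∃ N, IsMinGen S N ∧ N ≤ m := by
  obtain ⟨N, hNm, hN, hmin⟩ := exists_minimal_le_of_wellFoundedLT (· ∈ S) m hm
  exact ⟨N, ⟨hN, fun m' hm' hle => le_antisymm hle (hmin hm' hle)⟩, hNm⟩

theorem IsStronglyStable.add_single_mem (hSS : IsStronglyStable S) {m : Fin n → ℕ}
    {j l : Fin n} (hjl : j < l) (h : m + Pi.single l 1 ∈ S) : m + Pi.single j 1 ∈ S := by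
  convert hSS _ h j l hjl (by simp) using 1
  funext x
  by_cases hxj : x = j
  · subst hxj; simp [hjl.ne]
  · by_cases hxl : x = l
    · subst hxl; simp [hxj]
    · simp [hxj, hxl]

def prefixDeg (m : Fin n → ℕ) (k : ℕ) : ℕ := ∑ l with l.val ≤ k, m l

theorem prefixDeg_add_single (m : Fin n → ℕ) (l : Fin n) (k : ℕ) :
    prefixDeg (m + Pi.single l 1) k = prefixDeg m k + if (l : ℕ) ≤ k then 1 else 0 := by
  simp [prefixDeg, sum_add_distrib, sum_pi_single']

theorem prefixDeg_lt_prefixDeg {m m' : Fin n → ℕ} {k : ℕ}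
    (hle : ∀ x : Fin n, (x : ℕ) ≤ k → m x ≤ m' x) {j : Fin n} (hj : (j : ℕ) ≤ k)
    (hlt : m j < m' j) : prefixDeg m k < prefixDeg m' k :=
  sum_lt_sum (fun x hx => hle x (mem_filter.mp hx).2) ⟨j, by simpa using hj, hlt⟩

theorem mdeg_eq_prefixDeg (m : Fin n → ℕ) {k : ℕ} (hk : n ≤ k + 1) : mdeg m = prefixDeg m k := by
  simp only [mdeg, prefixDeg]
  rw [filter_true_of_mem fun l _ => by omega]

def expWeight (m : Fin n → ℕ) : ℕ := ∑ l : Fin n, (l : ℕ) * m l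

theorem expWeight_add_single (m : Fin n → ℕ) (l : Fin n) :
    expWeight (m + Pi.single l 1) = expWeight m + l := by
  simp [expWeight, mul_add, sum_add_distrib, Pi.single_apply]

theorem IsStronglyStable.mem_of_prefixDeg_le (hSS : IsStronglyStable S) (hI : IsMonomialIdeal S)
    {m m' : Fin n → ℕ} (hm : m ∈ S) (h : ∀ k, prefixDeg m k ≤ prefixDeg m' k) : m' ∈ S := by
  induction hw : expWeight m using Nat.strong_induction_on generalizing m with
  | _ w ih =>
  by_cases hle : m ≤ m'
  · exact hI.mem_of_le hm hle
  obtain ⟨l₀, hl₀⟩ : ∃ l, m' l < m l := by simpa [Pi.le_def] using hle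
  obtain ⟨l, -, hl, hlmin⟩ := exists_minimal_le_of_wellFoundedLT (fun x => m' x < m x) l₀ hl₀
  have hbelow : ∀ x, x < l → m x ≤ m' x := fun x hx =>
    not_lt.mp fun hx' => (hlmin hx' hx.le).not_gt hx
  obtain ⟨j, hjl, hj⟩ : ∃ j, j < l ∧ m j < m' j := by
    by_contra! hge
    have hlt : prefixDeg m' l < prefixDeg m l := prefixDeg_lt_prefixDeg
      (fun x hx => (Fin.le_def.mpr hx).lt_or_eq.elim (hge x) (fun e => e ▸ hl.le)) le_rfl hl
    exact (h l).not_gt hlt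
  set m₀ := m - Pi.single l 1
  have hm₀ : m₀ + Pi.single l 1 = m := by
    funext x
    by_cases hx : x = l
    · subst hx; simp [m₀]; omega
    · simp [m₀, hx]
  have hjl' : (j : ℕ) < l := hjl
  -- move one unit of exponent from `x_l`, the first variable where `m` exceeds `m'`, to an
  -- earlier `x_j` where `m` falls short of `m'`; this lowers `expWeight m`
  refine ih _ ?_ (hSS.add_single_mem hjl (hm₀ ▸ hm)) (fun k => ?_) rfl
  · rw [← hw, ← hm₀, expWeight_add_single, expWeight_add_single]
    omega
  · have hk := h k
    rw [← hm₀, prefixDeg_add_single] at hk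
    rw [prefixDeg_add_single]
    by_cases hjk : (j : ℕ) ≤ k ∧ k < l
    · have hstrict := prefixDeg_lt_prefixDeg
        (fun x hx => hbelow x (Fin.lt_def.mpr (by omega))) hjk.1 hj
      rw [← hm₀, prefixDeg_add_single, if_neg (by omega)] at hstrict
      rw [if_pos hjk.1]
      omega
    · split_ifs at hk ⊢ <;> omega

theorem monVec_le_monVec {i : ℕ} {α β : ℕ → ℕ} {t t' : ℕ} (hαβ : ∀ l < i, α l ≤ β l)
    (ht : t ≤ t') : monVec n i α t ≤ monVec n i β t' := fun l => by
  simp only [monVec]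
  split_ifs with h <;> first | exact hαβ _ h | omega

theorem monVec_congr {i : ℕ} {α β : ℕ → ℕ} (h : ∀ l < i, α l = β l) (t : ℕ) :
    monVec n i α t = monVec n i β t :=
  le_antisymm (monVec_le_monVec (fun l hl => (h l hl).le) le_rfl)
    (monVec_le_monVec (fun l hl => (h l hl).ge) le_rfl)

theorem monVec_zero_eq {i : ℕ} (hi : 1 ≤ i) (α : ℕ → ℕ) :
    monVec n i α 0 = monVec n (i - 1) α (α (i - 1)) := by
  funext l
  by_cases hl : (l : ℕ) = i - 1
  · simp [monVec, hl, show i - 1 < i by omega]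
  · simp only [monVec]
    split_ifs <;> omega

theorem mem_monVec_iff_fF_le (hI : IsMonomialIdeal S) (hArt : IsArtinianMonomialSet S)
    {i : ℕ} (hi : i < n) (α : ℕ → ℕ) (t : ℕ) : monVec n i α t ∈ S ↔ fF S i α ≤ t := by
  have hne : {t | monVec n i α t ∈ S}.Nonempty := by
    by_contra! h
    refine Set.infinite_of_injective_forall_mem (f := monVec n i α) (fun a b hab => ?_)
      (fun t => Set.eq_empty_iff_forall_notMem.mp h t) hArt
    simpa [monVec] using congrFun hab ⟨i, hi⟩
  exact ⟨fun h => Nat.sInf_le h,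
    fun h => hI.mem_of_le (Nat.sInf_mem hne) (monVec_le_monVec (fun _ _ => le_rfl) h)⟩

theorem mem_JSet_iff (hI : IsMonomialIdeal S) (hArt : IsArtinianMonomialSet S) {i : ℕ}
    (hi : i < n) {α : ℕ → ℕ} :
    α ∈ JSet S i ↔ (∀ l, i ≤ l → α l = 0) ∧ ∀ j < i, monVec n j α (α j) ∉ S := by
  refine and_congr_right fun _ => forall₂_congr fun j hj => ?_
  rw [mem_monVec_iff_fF_le hI hArt (hj.trans hi), not_le]

theorem one_le_fF (hI : IsMonomialIdeal S) (hArt : IsArtinianMonomialSet S) {i : ℕ}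
    (h1 : 1 ≤ i) (hi : i < n) {α : ℕ → ℕ} (hα : α ∈ JSet S i) : 1 ≤ fF S i α := by
  by_contra! h0
  have hmem := (mem_monVec_iff_fF_le hI hArt hi α 0).mpr (by omega)
  rw [monVec_zero_eq h1] at hmem
  exact ((mem_JSet_iff hI hArt hi).mp hα).2 (i - 1) (by omega) hmem

theorem prefixDeg_monVec {i : ℕ} (hi : i < n) (α : ℕ → ℕ) (t k : ℕ) :
    prefixDeg (monVec n i α t) k = if k < i then asum (k + 1) α else asum i α + t := by
  simp only [prefixDeg, monVec, sum_filter]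
  rw [Fin.sum_univ_eq_sum_range (fun l => if l ≤ k then
    (if l < i then α l else if l = i then t else 0) else 0) n]
  split_ifs with hk
  · rw [← sum_subset (range_subset_range.mpr (by omega : k + 1 ≤ n))
      fun l _ hl => by simp at hl; simp [show ¬ l ≤ k by omega]]
    exact sum_congr rfl fun l hl => by simp at hl; simp [show l ≤ k by omega, show l < i by omega]
  · rw [← sum_subset (range_subset_range.mpr (by omega : i + 1 ≤ n))
      fun l _ hl => by simp at hl; simp [show ¬ l < i by omega, show l ≠ i by omega]]
    rw [sum_range_succ, asum]
    simp only [show i ≤ k by omega, lt_irrefl, if_true, if_false]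
    congr 1
    exact sum_congr rfl fun l hl => by simp at hl; simp [show l ≤ k by omega, hl]

theorem mdeg_monVec {i : ℕ} (hi : i < n) (α : ℕ → ℕ) (t : ℕ) :
    mdeg (monVec n i α t) = asum i α + t := by
  rw [mdeg_eq_prefixDeg _ (le_refl (n - 1 + 1) |>.trans_eq' (by omega)), prefixDeg_monVec hi,
    if_neg (by omega)]

theorem asum_lastVec {i : ℕ} (hi : 1 ≤ i) (s : ℕ) : asum i (lastVec i s) = s := by
  simp [asum, lastVec, show i - 1 < i by omega]

theorem asum_lastVec_of_lt {i k : ℕ} (hk : k < i) (s : ℕ) : asum k (lastVec i s) = 0 :=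
  sum_eq_zero fun l hl => by simp at hl; simp [lastVec, show l ≠ i - 1 by omega]

def truncTuple (m : Fin n → ℕ) (i : ℕ) : ℕ → ℕ :=
  fun l => if h : l < i ∧ l < n then m ⟨l, h.2⟩ else 0

theorem truncTuple_eq_zero (m : Fin n → ℕ) {i l : ℕ} (hl : i ≤ l) : truncTuple m i l = 0 := by
  simp [truncTuple, show ¬ l < i by omega]

theorem truncTuple_apply (m : Fin n → ℕ) {i : ℕ} {l : Fin n} (hl : (l : ℕ) < i) :
    truncTuple m i l = m l := by
  simp [truncTuple, hl]

theorem monVec_truncTuple_le (m : Fin n → ℕ) {i : ℕ} {q : Fin n} (hq : (q : ℕ) ≤ i) :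
    monVec n q (truncTuple m i) (m q) ≤ m := fun l => by
  simp only [monVec]
  split_ifs with h1 h2
  · rw [truncTuple_apply m (by omega)]
  · rw [Fin.ext h2]
  · exact Nat.zero_le _

theorem monVec_truncTuple_eq {m : Fin n → ℕ} {i : Fin n} (hsupp : ∀ l, i < l → m l = 0) :
    monVec n i (truncTuple m i) (m i) = m := by
  funext l
  simp only [monVec]
  split_ifs with h1 h2
  · exact truncTuple_apply m h1
  · rw [Fin.ext h2]
  · exact (hsupp l (Fin.lt_def.mpr (by omega))).symm

theorem truncTuple_mem_JSet_of_forall_notMem (hI : IsMonomialIdeal S)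
    (hArt : IsArtinianMonomialSet S) {m : Fin n → ℕ} {i : Fin n}
    (h : ∀ q : Fin n, q < i → monVec n q (truncTuple m i) (m q) ∉ S) :
    truncTuple m i ∈ JSet S i := by
  refine (mem_JSet_iff hI hArt i.isLt).mpr ⟨fun l hl => truncTuple_eq_zero m hl, fun j hj => ?_⟩
  have hjn : j < n := hj.trans i.isLt
  simpa [truncTuple_apply m (l := ⟨j, hjn⟩) hj] using h ⟨j, hjn⟩ hj

theorem revLexLT_monVec_of_lt {i : ℕ} (hi : i < n) (α β : ℕ → ℕ) {t t' : ℕ} (ht : t' < t) :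
    RevLexLT (monVec n i α t) (monVec n i β t') :=
  ⟨⟨i, hi⟩, by simpa [monVec] using ht, fun l hl => by
    have hil : i < (l : ℕ) := hl
    simp [monVec, hil.not_gt, hil.ne']⟩

theorem revLexLT_monVec {i : ℕ} (hi : i < n) {α β : ℕ → ℕ} (hα : ∀ l, i ≤ l → α l = 0)
    (h : RevLexLT' α β) (t : ℕ) : RevLexLT (monVec n i α t) (monVec n i β t) := by
  obtain ⟨j, hj, hagree⟩ := h
  have hji : j < i := by_contra fun hc => by simp [hα j (by omega)] at hj
  refine ⟨⟨j, hji.trans hi⟩, by simpa [monVec, hji] using hj, fun l hl => ?_⟩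
  simp only [monVec]
  split_ifs <;> first | rfl | exact hagree l hl

theorem monVec_mem_of_lastVec_mem (hI : IsMonomialIdeal S) (hSS : IsStronglyStable S) {i : ℕ}
    (h1 : 1 ≤ i) (hi : i < n) {s t t' : ℕ} {β : ℕ → ℕ}
    (h : monVec n i (lastVec i s) t ∈ S) (hs : s ≤ asum i β) (hst : s + t ≤ asum i β + t') :
    monVec n i β t' ∈ S := by
  refine hSS.mem_of_prefixDeg_le hI h fun k => ?_
  rw [prefixDeg_monVec hi, prefixDeg_monVec hi, asum_lastVec h1]
  split_ifs with hk
  · rcases (show k + 1 < i ∨ k + 1 = i by omega) with hk' | hk'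
    · rw [asum_lastVec_of_lt hk']; exact Nat.zero_le _
    · rw [hk', asum_lastVec h1]; exact hs
  · exact hst

theorem exists_isMinGen_monVec_fF (hI : IsMonomialIdeal S) (hArt : IsArtinianMonomialSet S)
    {i : ℕ} (hi : i < n) (α : ℕ → ℕ) :
    ∃ γ : ℕ → ℕ, (∀ l < i, γ l ≤ α l) ∧ IsMinGen S (monVec n i γ (fF S i α)) := by
  set t := fF S i α
  obtain ⟨N, hN, hNle⟩ := exists_isMinGen_le ((mem_monVec_iff_fF_le hI hArt hi α t).mpr le_rfl)
  have hNi : N ⟨i, hi⟩ = t := by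
    refine le_antisymm (by simpa [monVec] using hNle ⟨i, hi⟩) (by_contra fun hlt => ?_)
    have hmem : monVec n i α (t - 1) ∈ S := hI.mem_of_le hN.1 fun l => by
      have := hNle l
      simp only [monVec] at this ⊢
      split_ifs at this ⊢ with h1 h2
      · exact this
      · obtain rfl : l = ⟨i, hi⟩ := Fin.ext h2
        omega
      · exact this
    have := (mem_monVec_iff_fF_le hI hArt hi α _).mp hmem
    omega
  have hsupp : ∀ l, (⟨i, hi⟩ : Fin n) < l → N l = 0 := fun l hl => by
    have hil : i < (l : ℕ) := hl
    simpa [monVec, hil.not_gt, hil.ne'] using hNle l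
  refine ⟨truncTuple N i, fun l hl => ?_, ?_⟩
  · simpa [monVec, truncTuple, hl, hl.trans hi] using hNle ⟨l, hl.trans hi⟩
  · rwa [← hNi, monVec_truncTuple_eq hsupp]

theorem AlmostRevLex.monVec_lastVec_mem (hARL : AlmostRevLex S) {i : ℕ} (h1 : 1 ≤ i)
    (hi : i < n) {γ : ℕ → ℕ} {t : ℕ} (ht : 1 ≤ t) (hN : IsMinGen S (monVec n i γ t)) :
    monVec n i (lastVec i (asum i γ + 1)) (t - 1) ∈ S :=
  hARL _ _ hN (by rw [mdeg_monVec hi, mdeg_monVec hi, asum_lastVec h1]; omega)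
    (revLexLT_monVec_of_lt hi _ _ (by omega))

theorem AlmostRevLex.fF_lastVec_lt (hARL : AlmostRevLex S) (hI : IsMonomialIdeal S)
    (hArt : IsArtinianMonomialSet S) {i : ℕ} (h1 : 1 ≤ i) (hi : i < n) {α : ℕ → ℕ}
    (hα : α ∈ JSet S i) : fF S i (lastVec i (asum i α + 1)) + 1 ≤ fF S i α := by
  have ht := one_le_fF hI hArt h1 hi hα
  obtain ⟨γ, hγα, hN⟩ := exists_isMinGen_monVec_fF hI hArt hi α
  have hγ : asum i γ ≤ asum i α := sum_le_sum fun l hl => hγα l (mem_range.mp hl)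
  have hmem := hI.mem_of_le (hARL.monVec_lastVec_mem h1 hi ht hN) <|
    monVec_le_monVec (β := lastVec i (asum i α + 1))
      (fun l _ => by simp only [lastVec]; split_ifs <;> omega) le_rfl
  have := (mem_monVec_iff_fF_le hI hArt hi _ _).mp hmem
  omega

theorem AlmostRevLex.fF_le_of_revLexLT (hARL : AlmostRevLex S) (hI : IsMonomialIdeal S)
    (hArt : IsArtinianMonomialSet S) (hSS : IsStronglyStable S) {i : ℕ} (h1 : 1 ≤ i)
    (hi : i < n) {α β : ℕ → ℕ} (hα : α ∈ JSet S i) (hsum : asum i α = asum i β)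
    (hαβ : RevLexLT' α β) : fF S i β ≤ fF S i α := by
  have ht := one_le_fF hI hArt h1 hi hα
  obtain ⟨γ, hγα, hN⟩ := exists_isMinGen_monVec_fF hI hArt hi α
  rw [← mem_monVec_iff_fF_le hI hArt hi]
  have hγ : asum i γ ≤ asum i α := sum_le_sum fun l hl => hγα l (mem_range.mp hl)
  rcases hγ.lt_or_eq with hlt | heq
  · exact monVec_mem_of_lastVec_mem hI hSS h1 hi (hARL.monVec_lastVec_mem h1 hi ht hN)
      (by omega) (by omega)
  · -- equal degrees force `γ = α`, so `x^α x_{i+1}^{f(α)}` is itself a minimal generator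
    have hγ_eq : ∀ l < i, γ l = α l := by
      by_contra! hne
      obtain ⟨l, hl, hne⟩ := hne
      exact heq.not_lt (sum_lt_sum (fun l hl => hγα l (mem_range.mp hl))
        ⟨l, mem_range.mpr hl, (hγα l hl).lt_of_ne hne⟩)
    rw [monVec_congr hγ_eq] at hN
    exact hARL _ _ hN (by rw [mdeg_monVec hi, mdeg_monVec hi, hsum])
      (revLexLT_monVec hi hα.1 hαβ _)

theorem exists_last_pos {m : Fin n → ℕ} {p : Fin n} (hp : 0 < m p) :
    ∃ J, p ≤ J ∧ 0 < m J ∧ ∀ l, J < l → m l = 0 := by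
  obtain ⟨J, hpJ, hJ, hmax⟩ := exists_maximal_ge_of_wellFoundedGT (fun x => 0 < m x) p hp
  exact ⟨J, hpJ, hJ, fun l hl => by_contra fun h => (hmax (Nat.pos_of_ne_zero h) hl.le).not_gt hl⟩

theorem IsMinGen.truncTuple_mem_JSet {N : Fin n → ℕ} (hN : IsMinGen S N) (hI : IsMonomialIdeal S)
    (hArt : IsArtinianMonomialSet S) {J : Fin n} (hJ : 0 < N J) : truncTuple N J ∈ JSet S J := by
  refine truncTuple_mem_JSet_of_forall_notMem hI hArt fun q hq hmem => ?_
  have := congrFun (hN.2 _ hmem (monVec_truncTuple_le N hq.le)) J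
  simp [monVec, show ¬ (J : ℕ) < q from not_lt.mpr hq.le, Fin.val_ne_of_ne hq.ne'] at this
  omega

theorem truncTuple_mem_JSet_of_notMem (hI : IsMonomialIdeal S) (hArt : IsArtinianMonomialSet S)
    {M : Fin n → ℕ} (hM : M ∉ S) (J : Fin n) : truncTuple M J ∈ JSet S J :=
  truncTuple_mem_JSet_of_forall_notMem hI hArt fun _ hq hmem =>
    hM (hI.mem_of_le hmem (monVec_truncTuple_le M hq.le))

theorem almostRevLex_of_fF_conditions (hI : IsMonomialIdeal S) (hArt : IsArtinianMonomialSet S)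
    (hSS : IsStronglyStable S)
    (h1 : ∀ i, 1 ≤ i → i < n → ∀ α ∈ JSet S i,
      fF S i (lastVec i (asum i α + 1)) + 1 ≤ fF S i α)
    (h2 : ∀ i, 1 ≤ i → i < n → ∀ α ∈ JSet S i, ∀ β ∈ JSet S i,
      asum i α = asum i β → RevLexLT' α β → fF S i β ≤ fF S i α) :
    AlmostRevLex S := by
  intro M N hN hdeg ⟨p, hp, hagree⟩
  by_contra hM
  obtain ⟨J, hpJ, hJ, hNsupp⟩ := exists_last_pos (show 0 < N p by omega)
  have hMsupp : ∀ l, J < l → M l = 0 := fun l hl =>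
    (hagree l (hpJ.trans_lt hl)).symm.trans (hNsupp l hl)
  set γ := truncTuple N J
  set μ := truncTuple M J
  have hNeq : monVec n J γ (N J) = N := monVec_truncTuple_eq hNsupp
  have hMeq : monVec n J μ (M J) = M := monVec_truncTuple_eq hMsupp
  have hγ : γ ∈ JSet S J := hN.truncTuple_mem_JSet hI hArt hJ
  have hμ : μ ∈ JSet S J := truncTuple_mem_JSet_of_notMem hI hArt hM J
  have hfγ : fF S J γ ≤ N J :=
    (mem_monVec_iff_fF_le hI hArt J.isLt _ _).mp (by rw [hNeq]; exact hN.1)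
  have hfμ : M J < fF S J μ :=
    not_le.mp fun h => hM (hMeq ▸ (mem_monVec_iff_fF_le hI hArt J.isLt _ _).mpr h)
  have hdegJ : asum J μ + M J = asum J γ + N J := by
    rw [← mdeg_monVec J.isLt, ← mdeg_monVec J.isLt, hMeq, hNeq, hdeg]
  rcases hpJ.lt_or_eq with hpJ | rfl
  · have hMJ : M J = N J := (hagree J hpJ).symm
    have hγμ : RevLexLT' γ μ := by
      refine ⟨p, by simpa [γ, μ, truncTuple_apply _ (Fin.lt_def.mp hpJ)] using hp, fun l hl => ?_⟩
      simp only [γ, μ, truncTuple]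
      split_ifs with h
      · exact hagree ⟨l, h.2⟩ hl
      · rfl
    have := h2 J (by have := Fin.lt_def.mp hpJ; omega) J.isLt γ hγ μ hμ (by omega) hγμ
    omega
  · have hJ1 : 1 ≤ (p : ℕ) := by
      by_contra h0
      simp [asum, show (p : ℕ) = 0 by omega] at hdegJ
      omega
    have hmem : monVec n p (lastVec p (asum p γ + 1)) (N p - 1) ∈ S :=
      (mem_monVec_iff_fF_le hI hArt p.isLt _ _).mpr (by have := h1 p hJ1 p.isLt γ hγ; omega)
    exact hM (hMeq ▸ monVec_mem_of_lastVec_mem hI hSS hJ1 p.isLt hmem (by omega) (by omega))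

end

/-- Lemma: equivalent condition for being almost reverse
lexicographic.  A strongly stable Artinian monomial ideal `J` in
`k[x_1,…,x_n]` is almost reverse lexicographic iff for every `1 ≤ i ≤ n-1`:
(1) `f_{i+1}(0,…,0,|α|+1) + 1 ≤ f_{i+1}(α)` for every `α ∈ J_i`, and
(2) `f_{i+1}(β) ≤ f_{i+1}(α)` for all `α, β ∈ J_i` with `|α| = |β|` and
`α < β` in reverse lexicographic order. -/
theorem almostRevLex_iff_fF_conditions
    {n : ℕ} (S : Set (Fin n → ℕ))
    (hIdeal : IsMonomialIdeal S) (hArt : IsArtinianMonomialSet S)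
    (hSS : IsStronglyStable S) :
    AlmostRevLex S ↔
      ∀ i, 1 ≤ i → i ≤ n - 1 →
        (∀ α ∈ JSet S i, fF S i (lastVec i (asum i α + 1)) + 1 ≤ fF S i α) ∧
        (∀ α ∈ JSet S i, ∀ β ∈ JSet S i,
          asum i α = asum i β → RevLexLT' α β → fF S i β ≤ fF S i α) := by
  constructor
  · intro hARL i h1 hi
    exact ⟨fun α hα => hARL.fF_lastVec_lt hIdeal hArt h1 (by omega) hα,
      fun α hα β _ hsum hαβ => hARL.fF_le_of_revLexLT hIdeal hArt hSS h1 (by omega) hα hsum hαβ⟩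
  · intro h
    exact almostRevLex_of_fF_conditions hIdeal hArt hSS
      (fun i h1 hi => (h i h1 (by omega)).1) (fun i h1 hi => (h i h1 (by omega)).2)
end
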